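/- Let K ≥ 2 and μ = (μ_1,…,μ_K) ∈ ℒ^K with m(μ_1) > max_{j≠1} m(μ_j) and f(|m(μ_j)|) < B for all j. Let 𝒜 = {ν ∈ ℒ^K : m(ν_1) ≤ max_{i≠1} m(ν_i)}. Then for every t = (t_1,…,t_K) in the probability simplex Σ_K, inf_{ν∈𝒜} Σ_{a=1}^K t_a·KL(μ_a,ν_a) = min_{j≥2} inf_{x ∈ [m(μ_j), m(μ_1)]} ( t_1·KL_inf(μ_1,x) + t_j·KL_inf(μ_j,x) ). -/

import Mathlib

/-!
For an alternative `ν` with `m(ν₀) ≤ m(νᵢ)`, clamping `m(νᵢ)` into `[m(μᵢ), m(μ₀)]` gives a point `x`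
lying between `m(μₐ)` and `m(νₐ)` for both `a = 0` and `a = i`, so `KL(μₐ, νₐ) ≥ KL_inf(μₐ, x)`,
while the other arms only add nonnegative terms. Conversely, given `j ≠ 0`, `x ∈ [m(μⱼ), m(μ₀)]`,
`κ₀ ∈ ℒ` with mean `≤ x` and `κⱼ ∈ ℒ` with mean `≥ x`, replacing `μ₀, μⱼ` by `κ₀, κⱼ` in `μ`
yields an alternative whose weighted divergence from `μ` is exactly `t₀ KL(μ₀, κ₀) + tⱼ KL(μⱼ, κⱼ)`.
-/

open MeasureTheory Filter Set
open scoped ENNReal NNReal Classical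

/-- Kullback–Leibler divergence between two measures on ℝ, valued in `ℝ≥0∞`
(`∞` if `η` is not absolutely continuous w.r.t. `κ` or the log-likelihood ratio
is not integrable under `η`). -/
noncomputable def KL (η κ : Measure ℝ) : ℝ≥0∞ :=
  if η ≪ κ ∧ Integrable (llr η κ) η then ENNReal.ofReal (∫ y, llr η κ y ∂η) else ⊤

/-- The mean of a measure on ℝ. -/
noncomputable def meanM (η : Measure ℝ) : ℝ := ∫ y, y ∂η

/-- Membership in the class `ℒ`: Borel probability measures on ℝ with `E[f(|X|)] ≤ B`. -/
def inL (f : ℝ → ℝ) (B : ℝ) (κ : Measure ℝ) : Prop :=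
  IsProbabilityMeasure κ ∧ (∫⁻ y, ENNReal.ofReal (f |y|) ∂κ) ≤ ENNReal.ofReal B

/-- `KL_inf(η, x)`: the infimum of `KL(η, κ)` over `κ ∈ ℒ` with `m(κ) ≥ x` when
`x ≥ m(η)`, and over `κ ∈ ℒ` with `m(κ) ≤ x` when `x < m(η)`. -/
noncomputable def KLinf (f : ℝ → ℝ) (B : ℝ) (η : Measure ℝ) (x : ℝ) : ℝ≥0∞ :=
  if meanM η ≤ x then
    ⨅ κ ∈ {κ : Measure ℝ | inL f B κ ∧ x ≤ meanM κ}, KL η κ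
  else
    ⨅ κ ∈ {κ : Measure ℝ | inL f B κ ∧ meanM κ ≤ x}, KL η κ

lemma KL_self_eq_zero (η : Measure ℝ) [SigmaFinite η] : KL η η = 0 := by
  have hllr : llr η η =ᵐ[η] 0 := by
    filter_upwards [Measure.rnDeriv_self η] with y hy
    simp [llr, hy]
  have hint : Integrable (llr η η) η := (integrable_congr hllr).mpr (integrable_zero _ _ _)
  rw [KL, if_pos ⟨Measure.AbsolutelyContinuous.rfl, hint⟩, integral_congr_ae hllr]
  simp

section KLinf

variable {f : ℝ → ℝ} {B : ℝ} {η κ : Measure ℝ} {x : ℝ}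

lemma KLinf_le_KL (hη : inL f B η) (hκ : inL f B κ) (hx : x ∈ uIcc (meanM η) (meanM κ)) :
    KLinf f B η x ≤ KL η κ := by
  have := hη.1
  rw [KLinf]
  split_ifs with hηx
  · rcases le_or_gt x (meanM κ) with hxκ | hκx
    · exact iInf₂_le κ ⟨hκ, hxκ⟩
    · have hxη : x = meanM η := by grind [mem_uIcc]
      calc _ ≤ KL η η := iInf₂_le η ⟨hη, hxη.le⟩
        _ = 0 := KL_self_eq_zero η
        _ ≤ KL η κ := zero_le
  · exact iInf₂_le κ ⟨hκ, by grind [mem_uIcc]⟩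

lemma KLinf_eq_iInf_of_le_meanM (hη : inL f B η) (hx : x ≤ meanM η) :
    KLinf f B η x = ⨅ κ ∈ {κ : Measure ℝ | inL f B κ ∧ meanM κ ≤ x}, KL η κ := by
  rcases hx.lt_or_eq with hlt | rfl
  · rw [KLinf, if_neg hlt.not_ge]
  -- at `x = meanM η` the definition takes the other branch, but both infima vanish at `η`
  have := hη.1
  have hzero : ⨅ κ ∈ {κ : Measure ℝ | inL f B κ ∧ meanM κ ≤ meanM η}, KL η κ = 0 :=
    le_antisymm ((iInf₂_le η ⟨hη, le_rfl⟩).trans (KL_self_eq_zero η).le) zero_le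
  rw [hzero, ← nonpos_iff_eq_zero, ← KL_self_eq_zero η]
  exact KLinf_le_KL hη hη (by simp)

end KLinf

lemma ENNReal.le_mul_biInf_add_mul_biInf {α β : Type*} {s : Set α} {t : Set β}
    (hs : s.Nonempty) (ht : t.Nonempty) {a b c : ℝ≥0∞} (ha : a ≠ ∞) (hb : b ≠ ∞)
    {g : α → ℝ≥0∞} {h : β → ℝ≥0∞} (hle : ∀ i ∈ s, ∀ j ∈ t, c ≤ a * g i + b * h j) :
    c ≤ a * (⨅ i ∈ s, g i) + b * ⨅ j ∈ t, h j := by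
  have := hs.to_subtype
  have := ht.to_subtype
  simp only [iInf_subtype']
  rw [ENNReal.mul_iInf (by simp [ha]), ENNReal.mul_iInf (by simp [hb]), ENNReal.iInf_add]
  simp only [ENNReal.add_iInf]
  exact le_iInf₂ fun i j => hle i i.2 j j.2

lemma exists_mem_Icc_mem_uIcc {a b p q : ℝ} (hab : a ≤ b) (hpq : p ≤ q) :
    ∃ x ∈ Icc a b, x ∈ uIcc a q ∧ x ∈ uIcc p b :=
  ⟨max a (min q b), by grind [mem_uIcc]⟩

section Alternatives

variable {ι : Type*} [Fintype ι] {f : ℝ → ℝ} {B : ℝ} {μ : ι → Measure ℝ} {i₀ : ι}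

/-- The set `𝒜` of alternatives to an instance with best arm `i₀`. -/
def altSet (f : ℝ → ℝ) (B : ℝ) (i₀ : ι) : Set (ι → Measure ℝ) :=
  {ν | (∀ i, inL f B (ν i)) ∧ ∃ i, i ≠ i₀ ∧ meanM (ν i₀) ≤ meanM (ν i)}

lemma sum_mul_KL_update_update [DecidableEq ι] [∀ i, SigmaFinite (μ i)] (w : ι → ℝ≥0∞)
    {i j : ι} (hij : i ≠ j) (κi κj : Measure ℝ) :
    ∑ a, w a * KL (μ a) (Function.update (Function.update μ j κj) i κi a) =
      w i * KL (μ i) κi + w j * KL (μ j) κj := by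
  rw [Fintype.sum_eq_add i j hij fun a ha => by simp [ha.1, ha.2, KL_self_eq_zero]]
  simp [hij.symm]

lemma iInf_altSet_le [DecidableEq ι] (hμ : ∀ i, inL f B (μ i)) {w : ι → ℝ≥0∞}
    (hw : ∀ a, w a ≠ ∞) {j : ι} (hj : j ≠ i₀) {x : ℝ}
    (hx : x ∈ Icc (meanM (μ j)) (meanM (μ i₀))) :
    ⨅ ν ∈ altSet f B i₀, ∑ a, w a * KL (μ a) (ν a) ≤
      w i₀ * KLinf f B (μ i₀) x + w j * KLinf f B (μ j) x := by
  have : ∀ i, IsProbabilityMeasure (μ i) := fun i => (hμ i).1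
  rw [KLinf_eq_iInf_of_le_meanM (hμ i₀) hx.2, KLinf, if_pos hx.1]
  have hμj : μ j ∈ {κ : Measure ℝ | inL f B κ ∧ meanM κ ≤ x} := ⟨hμ j, hx.1⟩
  have hμ₀ : μ i₀ ∈ {κ : Measure ℝ | inL f B κ ∧ x ≤ meanM κ} := ⟨hμ i₀, hx.2⟩
  refine ENNReal.le_mul_biInf_add_mul_biInf ⟨_, hμj⟩ ⟨_, hμ₀⟩ (hw i₀) (hw j)
    fun κ₀ hκ₀ κj hκj => ?_
  set ν := Function.update (Function.update μ j κj) i₀ κ₀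
  have hν : ν ∈ altSet f B i₀ := by
    refine ⟨fun a => ?_, j, hj, ?_⟩
    · by_cases h₀ : a = i₀
      · simpa [ν, h₀] using hκ₀.1
      by_cases h : a = j
      · simpa [ν, h, hj] using hκj.1
      · simpa [ν, h₀, h] using hμ a
    · simpa [ν, hj] using hκ₀.2.trans hκj.2
  exact (iInf₂_le ν hν).trans (sum_mul_KL_update_update w hj.symm κ₀ κj).le

lemma le_sum_of_mem_altSet (hμ : ∀ i, inL f B (μ i))
    (hbest : ∀ j, j ≠ i₀ → meanM (μ j) ≤ meanM (μ i₀)) (w : ι → ℝ≥0∞)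
    {ν : ι → Measure ℝ} (hν : ν ∈ altSet f B i₀) :
    ⨅ j ∈ {j | j ≠ i₀}, ⨅ x ∈ Icc (meanM (μ j)) (meanM (μ i₀)),
        (w i₀ * KLinf f B (μ i₀) x + w j * KLinf f B (μ j) x) ≤
      ∑ a, w a * KL (μ a) (ν a) := by
  obtain ⟨hνL, i, hi, hmean⟩ := hν
  obtain ⟨x, hx, hxi, hx₀⟩ := exists_mem_Icc_mem_uIcc (hbest i hi) hmean
  calc _ ≤ w i₀ * KLinf f B (μ i₀) x + w i * KLinf f B (μ i) x :=
        (iInf₂_le i hi).trans (iInf₂_le x hx)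
    _ ≤ w i₀ * KL (μ i₀) (ν i₀) + w i * KL (μ i) (ν i) := by
        gcongr
        · exact KLinf_le_KL (hμ i₀) (hνL i₀) (by rwa [uIcc_comm])
        · exact KLinf_le_KL (hμ i) (hνL i) hxi
    _ ≤ ∑ a, w a * KL (μ a) (ν a) :=
        Finset.add_le_sum (f := fun a => w a * KL (μ a) (ν a)) (fun _ _ => zero_le)
          (Finset.mem_univ _) (Finset.mem_univ _) hi.symm

end Alternatives

/-- For `μ ∈ ℒ^K` with arm `0` having the strictly largest mean and
`f(|m(μⱼ)|) < B` for all `j`, and for any `t` in the probability simplex, the inner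
optimization of the lower-bound problem simplifies:
`inf_{ν ∈ 𝒜} ∑ₐ tₐ KL(μₐ, νₐ)
  = min_{j ≠ 0} inf_{x ∈ [m(μⱼ), m(μ₀)]} (t₀ KL_inf(μ₀, x) + tⱼ KL_inf(μⱼ, x))`. -/
theorem stmt_8 (f : ℝ → ℝ) (B : ℝ)
    (K : ℕ) (hK : 2 ≤ K) (μ : Fin K → Measure ℝ)
    (hμ : ∀ i, inL f B (μ i))
    (hbest : ∀ j : Fin K, j ≠ ⟨0, by omega⟩ → meanM (μ j) < meanM (μ ⟨0, by omega⟩))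
    (t : Fin K → ℝ) :
    (⨅ ν ∈ {ν : Fin K → Measure ℝ | (∀ i, inL f B (ν i)) ∧
        ∃ i : Fin K, i ≠ ⟨0, by omega⟩ ∧ meanM (ν ⟨0, by omega⟩) ≤ meanM (ν i)},
      ∑ a, ENNReal.ofReal (t a) * KL (μ a) (ν a)) =
    ⨅ j ∈ {j : Fin K | j ≠ ⟨0, by omega⟩},
      ⨅ x ∈ Set.Icc (meanM (μ j)) (meanM (μ ⟨0, by omega⟩)),
        (ENNReal.ofReal (t ⟨0, by omega⟩) * KLinf f B (μ ⟨0, by omega⟩) x +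
          ENNReal.ofReal (t j) * KLinf f B (μ j) x) := by
  refine le_antisymm (le_iInf₂ fun j hj => le_iInf₂ fun x hx => ?_) (le_iInf₂ fun ν hν => ?_)
  · exact iInf_altSet_le (w := fun a => ENNReal.ofReal (t a)) hμ
      (fun _ => ENNReal.ofReal_ne_top) hj hx
  · exact le_sum_of_mem_altSet hμ (fun j hj => (hbest j hj).le)
      (fun a => ENNReal.ofReal (t a)) hν
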